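/- arXiv:2502.01814 — 3 statements merged into one kernel-verified Lean document; each statement's English description precedes it below -/
import Mathlib

section
/- Let a < b be real numbers and let η be a real-valued function on nonempty finite subsets of the interval [a,b] that is uniformly continuous with respect to the Hausdorff distance, i.e., for every ε₁ > 0 there exists δ₁ > 0 such that for all nonempty finite sets S, S' ⊆ [a,b] with Hausdorff distance d_H(S,S') < δ₁ one has |η(S) − η(S')| < ε₁. Then for every ε > 0 there exist a natural number K, a continuous function σ : ℝ → ℝ^K, and a continuous function ζ : ℝ^K → ℝ, such that for every nonempty finite set S ⊆ [a,b], |η(S) − ζ(∑_{x∈S} σ(x))| < ε. -/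
/-!
Cover the (totally bounded) domain by an `r/2`-net `p₀, …, p_{K-1}` with `r` below the modulus
of continuity of `η`, and let the `k`-th coordinate of `σ x` be a tent of radius `r` around `p k`.
After a clamp, the pooled vector `∑_{x ∈ S} σ x` tells which net points are `r/2`-close to `S`
(value `1`) and which are `r`-far from `S` (value `0`). The decoder `ζ` reads these clamped values
as independent coin biases and returns the expected value of `η` on the random set of net points
selected by the coins; every selection of positive probability lies within Hausdorff distance `r`
of `S`, so the expectation is within the modulus of `η S`.
-/

open Finset Metric

theorem abs_sub_sum_mul_le {α : Type*} {s : Finset α} {w g : α → ℝ} {c ε : ℝ}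
    (hw : ∀ i ∈ s, 0 ≤ w i) (hw₁ : ∑ i ∈ s, w i = 1)
    (hg : ∀ i ∈ s, w i ≠ 0 → |c - g i| ≤ ε) :
    |c - ∑ i ∈ s, w i * g i| ≤ ε := by
  have hdiff : c - ∑ i ∈ s, w i * g i = ∑ i ∈ s, w i * (c - g i) := by
    simp only [mul_sub, sum_sub_distrib, ← sum_mul, hw₁, one_mul]
  calc |c - ∑ i ∈ s, w i * g i| ≤ ∑ i ∈ s, |w i * (c - g i)| := hdiff ▸ abs_sum_le_sum_abs _ _
    _ ≤ ∑ i ∈ s, w i * ε := by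
      refine sum_le_sum fun i hi => ?_
      rw [abs_mul, abs_of_nonneg (hw i hi)]
      by_cases h0 : w i = 0
      · simp [h0]
      · exact mul_le_mul_of_nonneg_left (hg i hi h0) (hw i hi)
    _ = ε := by rw [← sum_mul, hw₁, one_mul]

section BernoulliWeight

variable {ι : Type*} [Fintype ι] [DecidableEq ι]

def bernoulliWeight (v : ι → ℝ) (P : Finset ι) : ℝ :=
  (∏ k ∈ P, v k) * ∏ k ∈ univ \ P, (1 - v k)

theorem sum_bernoulliWeight (v : ι → ℝ) : ∑ P, bernoulliWeight v P = 1 := by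
  simp only [bernoulliWeight, ← powerset_univ, ← prod_add, add_sub_cancel, prod_const_one]

theorem bernoulliWeight_nonneg {v : ι → ℝ} (hv : ∀ k, v k ∈ Set.Icc 0 1) (P : Finset ι) :
    0 ≤ bernoulliWeight v P :=
  mul_nonneg (prod_nonneg fun k _ => (hv k).1) (prod_nonneg fun k _ => sub_nonneg.2 (hv k).2)

theorem ne_zero_of_bernoulliWeight_ne_zero {v : ι → ℝ} {P : Finset ι} {k : ι}
    (hP : bernoulliWeight v P ≠ 0) (hk : k ∈ P) : v k ≠ 0 := fun h0 =>
  hP (by rw [bernoulliWeight, prod_eq_zero hk h0, zero_mul])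

theorem ne_one_of_bernoulliWeight_ne_zero {v : ι → ℝ} {P : Finset ι} {k : ι}
    (hP : bernoulliWeight v P ≠ 0) (hk : k ∉ P) : v k ≠ 1 := fun h1 =>
  hP (by rw [bernoulliWeight, prod_eq_zero (mem_sdiff.2 ⟨mem_univ k, hk⟩) (sub_eq_zero.2 h1.symm),
    mul_zero])

theorem continuous_bernoulliWeight (P : Finset ι) :
    Continuous fun v : ι → ℝ => bernoulliWeight v P := by
  unfold bernoulliWeight
  fun_prop

end BernoulliWeight

def clampStep (t : ℝ) : ℝ := max 0 (min 1 (2 * t))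

theorem continuous_clampStep : Continuous clampStep := by
  unfold clampStep
  fun_prop

theorem clampStep_mem_Icc (t : ℝ) : clampStep t ∈ Set.Icc 0 1 :=
  ⟨le_max_left _ _, max_le zero_le_one (min_le_left _ _)⟩

theorem clampStep_zero : clampStep 0 = 0 := by norm_num [clampStep]

theorem clampStep_of_one_half_le {t : ℝ} (ht : 1 / 2 ≤ t) : clampStep t = 1 := by
  rw [clampStep, min_eq_left (by linarith), max_eq_right zero_le_one]

section Tent

variable {X : Type*} [PseudoMetricSpace X]

noncomputable def tent (r : ℝ) (p x : X) : ℝ := max 0 (1 - dist x p / r)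

theorem continuous_tent (r : ℝ) (p : X) : Continuous (tent r p) := by
  unfold tent
  fun_prop

theorem tent_nonneg (r : ℝ) (p x : X) : 0 ≤ tent r p x := le_max_left _ _

theorem dist_lt_of_tent_ne_zero {r : ℝ} (hr : 0 < r) {p x : X} (h : tent r p x ≠ 0) :
    dist x p < r := by
  by_contra! hle
  exact h (max_eq_left (by rw [sub_nonpos, le_div_iff₀ hr]; linarith))

theorem one_half_le_tent {r : ℝ} (hr : 0 < r) {p x : X} (h : dist x p ≤ r / 2) :
    1 / 2 ≤ tent r p x := by
  refine le_max_of_le_right ?_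
  rw [le_sub_comm, div_le_iff₀ hr]
  linarith

theorem exists_dist_lt_of_clampStep_sum_tent_ne_zero {r : ℝ} (hr : 0 < r) {p : X} {S : Finset X}
    (h : clampStep (∑ x ∈ S, tent r p x) ≠ 0) : ∃ x ∈ S, dist x p < r := by
  obtain ⟨x, hxS, hx⟩ := exists_ne_zero_of_sum_ne_zero fun h0 => h (h0 ▸ clampStep_zero)
  exact ⟨x, hxS, dist_lt_of_tent_ne_zero hr hx⟩

theorem clampStep_sum_tent_eq_one {r : ℝ} (hr : 0 < r) {p x : X} {S : Finset X} (hx : x ∈ S)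
    (hxp : dist x p ≤ r / 2) : clampStep (∑ y ∈ S, tent r p y) = 1 :=
  clampStep_of_one_half_le <|
    (one_half_le_tent hr hxp).trans (single_le_sum (fun y _ => tent_nonneg r p y) hx)

end Tent

theorem TotallyBounded.exists_fin_net {X : Type*} [PseudoMetricSpace X] {A : Set X}
    (hA : TotallyBounded A) {r : ℝ} (hr : 0 < r) :
    ∃ (K : ℕ) (p : Fin K → X), (∀ k, p k ∈ A) ∧ ∀ x ∈ A, ∃ k, dist x (p k) < r := by
  obtain ⟨t, htA, ht, hcover⟩ := finite_approx_of_totallyBounded hA r hr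
  obtain ⟨K, p, -, rfl⟩ := ht.fin_param
  refine ⟨K, p, fun k => htA (Set.mem_range_self k), fun x hx => ?_⟩
  simpa using hcover hx

section Pattern

variable {X ι : Type*} [PseudoMetricSpace X] [Fintype ι] [DecidableEq ι]
  {r : ℝ} {p : ι → X} {S : Finset X} {P : Finset ι}

theorem mem_of_bernoulliWeight_ne_zero (hr : 0 < r)
    (hP : bernoulliWeight (fun k => clampStep (∑ x ∈ S, tent r (p k) x)) P ≠ 0)
    {x : X} {k : ι} (hx : x ∈ S) (hxk : dist x (p k) ≤ r / 2) : k ∈ P := by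
  by_contra hk
  exact ne_one_of_bernoulliWeight_ne_zero hP hk (clampStep_sum_tent_eq_one hr hx hxk)

theorem exists_dist_lt_of_bernoulliWeight_ne_zero (hr : 0 < r)
    (hP : bernoulliWeight (fun k => clampStep (∑ x ∈ S, tent r (p k) x)) P ≠ 0)
    {k : ι} (hk : k ∈ P) : ∃ x ∈ S, dist x (p k) < r :=
  exists_dist_lt_of_clampStep_sum_tent_ne_zero hr
    (ne_zero_of_bernoulliWeight_ne_zero (v := fun k => clampStep (∑ x ∈ S, tent r (p k) x)) hP hk)

theorem hausdorffDist_image_le_of_bernoulliWeight_ne_zero [DecidableEq X] (hr : 0 < r)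
    (hnet : ∀ x ∈ S, ∃ k, dist x (p k) ≤ r / 2)
    (hP : bernoulliWeight (fun k => clampStep (∑ x ∈ S, tent r (p k) x)) P ≠ 0) :
    hausdorffDist (S : Set X) (P.image p : Set X) ≤ r := by
  refine hausdorffDist_le_of_mem_dist hr.le (fun x hx => ?_) (fun y hy => ?_)
  · obtain ⟨k, hxk⟩ := hnet x hx
    exact ⟨p k, mem_image_of_mem p (mem_of_bernoulliWeight_ne_zero hr hP hx hxk),
      hxk.trans (half_le_self hr.le)⟩
  · obtain ⟨k, hk, rfl⟩ := mem_image.1 hy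
    obtain ⟨x, hx, hxk⟩ := exists_dist_lt_of_bernoulliWeight_ne_zero hr hP hk
    exact ⟨x, hx, dist_comm x (p k) ▸ hxk.le⟩

end Pattern

theorem TotallyBounded.exists_sum_pooling_approx {X : Type*} [PseudoMetricSpace X] {A : Set X}
    (hA : TotallyBounded A) (η : Finset X → ℝ)
    (hη : ∀ ε₁ > (0 : ℝ), ∃ δ₁ > (0 : ℝ), ∀ S S' : Finset X, S.Nonempty → S'.Nonempty →
      (↑S : Set X) ⊆ A → (↑S' : Set X) ⊆ A → hausdorffDist (↑S : Set X) ↑S' < δ₁ →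
      |η S - η S'| < ε₁) :
    ∀ ε > (0 : ℝ), ∃ (K : ℕ) (σ : X → (Fin K → ℝ)) (ζ : (Fin K → ℝ) → ℝ),
      Continuous σ ∧ Continuous ζ ∧
      ∀ S : Finset X, S.Nonempty → (↑S : Set X) ⊆ A → |η S - ζ (∑ x ∈ S, σ x)| < ε := by
  classical
  intro ε hε
  obtain ⟨δ, hδ, hηδ⟩ := hη (ε / 2) (half_pos hε)
  set r := δ / 2
  have hr : 0 < r := half_pos hδ
  obtain ⟨K, p, hpA, hnet⟩ := hA.exists_fin_net (half_pos hr)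
  refine ⟨K, fun x k => tent r (p k) x,
    fun v => ∑ P, bernoulliWeight (fun k => clampStep (v k)) P * η (P.image p),
    continuous_pi fun k => continuous_tent r (p k),
    continuous_finsetSum _ fun P _ => ((continuous_bernoulliWeight P).comp
      (continuous_pi fun k => continuous_clampStep.comp (continuous_apply k))).mul
        continuous_const, fun S hS hSA => ?_⟩
  have hnetS : ∀ x ∈ S, ∃ k, dist x (p k) ≤ r / 2 := fun x hx =>
    (hnet x (hSA hx)).imp fun _ => le_of_lt
  simp only [Finset.sum_apply]
  refine lt_of_le_of_lt ?_ (half_lt_self hε)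
  refine abs_sub_sum_mul_le (fun P _ => bernoulliWeight_nonneg (fun k => clampStep_mem_Icc _) P)
    (sum_bernoulliWeight _) fun P _ hP => ?_
  obtain ⟨x, hx⟩ := hS
  obtain ⟨k, hxk⟩ := hnetS x hx
  refine (hηδ S (P.image p) ⟨x, hx⟩ ⟨p k, mem_image_of_mem p
    (mem_of_bernoulliWeight_ne_zero hr hP hx hxk)⟩ hSA ?_ ?_).le
  · rw [coe_image]
    exact Set.image_subset_iff.2 fun k _ => hpA k
  · exact (hausdorffDist_image_le_of_bernoulliWeight_ne_zero hr hnetS hP).trans_lt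
      (half_lt_self hδ)

theorem universal_approximation_sum_pooling_general (a b : ℝ)
    (η : Finset ℝ → ℝ)
    (hη : ∀ ε₁ > (0 : ℝ), ∃ δ₁ > (0 : ℝ), ∀ S S' : Finset ℝ,
      S.Nonempty → S'.Nonempty →
      (↑S : Set ℝ) ⊆ Set.Icc a b → (↑S' : Set ℝ) ⊆ Set.Icc a b →
      Metric.hausdorffDist (↑S : Set ℝ) (↑S' : Set ℝ) < δ₁ → |η S - η S'| < ε₁) :
    ∀ ε > (0 : ℝ), ∃ (K : ℕ) (σ : ℝ → (Fin K → ℝ)) (ζ : (Fin K → ℝ) → ℝ),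
      Continuous σ ∧ Continuous ζ ∧
      ∀ S : Finset ℝ, S.Nonempty → (↑S : Set ℝ) ⊆ Set.Icc a b →
        |η S - ζ (∑ x ∈ S, σ x)| < ε :=
  isCompact_Icc.totallyBounded.exists_sum_pooling_approx η hη

/-- Universal approximation for sum-pooled per-point encoders (paper's Theorem 2). -/
theorem universal_approximation_sum_pooling (a b : ℝ) (hab : a < b)
    (η : Finset ℝ → ℝ)
    (hη : ∀ ε₁ > (0 : ℝ), ∃ δ₁ > (0 : ℝ), ∀ S S' : Finset ℝ,
      S.Nonempty → S'.Nonempty →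
      (↑S : Set ℝ) ⊆ Set.Icc a b → (↑S' : Set ℝ) ⊆ Set.Icc a b →
      Metric.hausdorffDist (↑S : Set ℝ) (↑S' : Set ℝ) < δ₁ → |η S - η S'| < ε₁) :
    ∀ ε > (0 : ℝ), ∃ (K : ℕ) (σ : ℝ → (Fin K → ℝ)) (ζ : (Fin K → ℝ) → ℝ),
      Continuous σ ∧ Continuous ζ ∧
      ∀ S : Finset ℝ, S.Nonempty → (↑S : Set ℝ) ⊆ Set.Icc a b →
        |η S - ζ (∑ x ∈ S, σ x)| < ε :=
  universal_approximation_sum_pooling_general a b η hη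
end

section
/- In the Euclidean plane ℝ² with its standard orientation, let n ≥ 1 and let p, p' : {0,1,…,n} → ℝ² be two sequences of points such that consecutive points are distinct: p(i) ≠ p(i+1) and p'(i) ≠ p'(i+1) for all 0 ≤ i < n. Suppose that p(0) = p'(0) and p(1) = p'(1), that dist(p(i), p(i+1)) = dist(p'(i), p'(i+1)) for all 0 ≤ i < n, and that the oriented angles agree at every interior vertex: ∡ p(i−1) p(i) p(i+1) = ∡ p'(i−1) p'(i) p'(i+1) for all 1 ≤ i ≤ n−1. Then p(i) = p'(i) for all i. -/
open EuclideanGeometry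

noncomputable instance : Module.Oriented ℝ (EuclideanSpace ℝ (Fin 2)) (Fin 2) :=
  ⟨(EuclideanSpace.basisFun (Fin 2) ℝ).toBasis.orientation⟩

instance : Fact (Module.finrank ℝ (EuclideanSpace ℝ (Fin 2)) = 2) :=
  ⟨finrank_euclideanSpace_fin⟩

lemma step_unique (x y z z' : EuclideanSpace ℝ (Fin 2)) (hxy : x ≠ y) (hz : z ≠ y)
    (hz' : z' ≠ y) (hd : dist y z = dist y z') (ha : ∡ x y z = ∡ x y z') : z = z' := by
  let o : Orientation ℝ (EuclideanSpace ℝ (Fin 2)) (Fin 2) := Module.Oriented.positiveOrientation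
  have hx0 : x -ᵥ y ≠ 0 := fun h => hxy (by simpa using vsub_eq_zero_iff_eq.mp h)
  have hz0 : z -ᵥ y ≠ 0 := fun h => hz (by simpa using vsub_eq_zero_iff_eq.mp h)
  have hz'0 : z' -ᵥ y ≠ 0 := fun h => hz' (by simpa using vsub_eq_zero_iff_eq.mp h)
  have h1 : o.oangle (x -ᵥ y) (z -ᵥ y) = o.oangle (x -ᵥ y) (z' -ᵥ y) := ha
  rw [o.oangle_eq_iff_eq_norm_div_norm_smul_rotation_of_ne_zero hx0 hz0] at h1
  have h2 : z' -ᵥ y = (‖z' -ᵥ y‖ / ‖x -ᵥ y‖) •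
      o.rotation (o.oangle (x -ᵥ y) (z' -ᵥ y)) (x -ᵥ y) :=
    (o.oangle_eq_iff_eq_norm_div_norm_smul_rotation_of_ne_zero hx0 hz'0 _).mp rfl
  have hnorm : ‖z -ᵥ y‖ = ‖z' -ᵥ y‖ := by
    rw [← dist_eq_norm_vsub, ← dist_eq_norm_vsub, dist_comm z y, dist_comm z' y]; exact hd
  have : z -ᵥ y = z' -ᵥ y := by rw [h1, hnorm, ← h2]
  exact vsub_left_cancel this

/-- Paper's Lemma (Appendix C): a polygonal chain in the oriented plane is uniquely
determined by its first two vertices, its consecutive edge lengths, and the oriented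
angles at its interior vertices. -/
theorem chain_unique_of_dists_oangles (n : ℕ) (hn : 1 ≤ n)
    (p p' : ℕ → EuclideanSpace ℝ (Fin 2))
    (hne : ∀ i < n, p i ≠ p (i + 1)) (hne' : ∀ i < n, p' i ≠ p' (i + 1))
    (h0 : p 0 = p' 0) (h1 : p 1 = p' 1)
    (hd : ∀ i < n, dist (p i) (p (i + 1)) = dist (p' i) (p' (i + 1)))
    (hθ : ∀ i, 1 ≤ i → i ≤ n - 1 →
      ∡ (p (i - 1)) (p i) (p (i + 1)) = ∡ (p' (i - 1)) (p' i) (p' (i + 1))) :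
    ∀ i ≤ n, p i = p' i := by

  intro i
  induction i using Nat.strong_induction_on with
  | _ i ih =>
    intro hi
    match i with
    | 0 => exact h0
    | 1 => exact h1
    | (j + 2) =>
      have hj : j + 1 < n := by omega
      have hj' : j < n := by omega
      have e0 : p j = p' j := ih j (by omega) (by omega)
      have e1 : p (j + 1) = p' (j + 1) := ih (j + 1) (by omega) (by omega)
      have ha := hθ (j + 1) (by omega) (by omega)
      simp only [Nat.add_sub_cancel] at ha
      rw [← e0, ← e1] at ha
      have hdist := hd (j + 1) hj
      rw [← e1] at hdist
      exact step_unique (p j) (p (j + 1)) (p (j + 2)) (p' (j + 2))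
        (hne j hj') (hne (j + 1) hj).symm (e1 ▸ (hne' (j + 1) hj).symm) hdist ha
end

section
/- Let n be a natural number, let S be a subset of ℝⁿ (EuclideanSpace ℝ (Fin n)), and let f : ℝⁿ → ℝⁿ be a map that preserves all pairwise distances on S, i.e., dist(f(x), f(y)) = dist(x, y) for all x, y ∈ S. Then there exists an isometry g of ℝⁿ onto itself (a bijective distance-preserving map, realizable as an affine isometry equivalence) such that g(x) = f(x) for every x ∈ S. -/
/-!
Translating a base point `p₀ ∈ S` and its image to the origin, polarization turns the preserved
distances into preserved inner products of the vectors `x -ᵥ p₀`. Two families with the same Gram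
matrix satisfy the same linear relations, since `‖∑ cᵢ wᵢ‖ = ‖∑ cᵢ vᵢ‖`; hence `vᵢ ↦ wᵢ` is a
well-defined linear isometry on the span of the `vᵢ`, which in finite dimension extends to the
whole space because the two orthogonal complements have the same dimension.
-/

open Submodule
open scoped RealInnerProductSpace

section Linear

variable {ι E E' : Type*} [NormedAddCommGroup E] [InnerProductSpace ℝ E]
  [NormedAddCommGroup E'] [InnerProductSpace ℝ E']

theorem inner_linearCombination_eq_of_inner_eq {v : ι → E} {w : ι → E'}
    (h : ∀ i j, ⟪w i, w j⟫ = ⟪v i, v j⟫) (c d : ι →₀ ℝ) :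
    ⟪Finsupp.linearCombination ℝ w c, Finsupp.linearCombination ℝ w d⟫ =
      ⟪Finsupp.linearCombination ℝ v c, Finsupp.linearCombination ℝ v d⟫ := by
  have : (innerₗ E').compl₁₂ (Finsupp.linearCombination ℝ w) (Finsupp.linearCombination ℝ w) =
      (innerₗ E).compl₁₂ (Finsupp.linearCombination ℝ v) (Finsupp.linearCombination ℝ v) :=
    LinearMap.ext_basis Finsupp.basisSingleOne Finsupp.basisSingleOne fun i j => by
      simpa using h i j
  exact LinearMap.congr_fun₂ this c d

theorem norm_linearCombination_eq_of_inner_eq {v : ι → E} {w : ι → E'}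
    (h : ∀ i j, ⟪w i, w j⟫ = ⟪v i, v j⟫) (c : ι →₀ ℝ) :
    ‖Finsupp.linearCombination ℝ w c‖ = ‖Finsupp.linearCombination ℝ v c‖ := by
  rw [norm_eq_sqrt_real_inner, norm_eq_sqrt_real_inner, inner_linearCombination_eq_of_inner_eq h]

theorem exists_linearIsometry_span_of_inner_eq {v : ι → E} {w : ι → E'}
    (h : ∀ i j, ⟪w i, w j⟫ = ⟪v i, v j⟫) :
    ∃ L : span ℝ (Set.range v) →ₗᵢ[ℝ] E',
      ∀ i, L ⟨v i, subset_span (Set.mem_range_self i)⟩ = w i := by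
  set A := Finsupp.linearCombination ℝ v
  set B := Finsupp.linearCombination ℝ w
  have hker : LinearMap.ker A ≤ LinearMap.ker B := fun c hc => by
    rw [LinearMap.mem_ker, ← norm_eq_zero] at hc ⊢
    rwa [norm_linearCombination_eq_of_inner_eq h]
  let L : span ℝ (Set.range v) →ₗ[ℝ] E' :=
    (LinearMap.ker A).liftQ B hker ∘ₗ A.quotKerEquivRange.symm.toLinearMap ∘ₗ
      (LinearEquiv.ofEq _ _ (Finsupp.range_linearCombination ℝ)).symm.toLinearMap
  have hL : ∀ (x : span ℝ (Set.range v)) c, A c = x → L x = B c := by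
    rintro ⟨_, hx⟩ c rfl
    have : (LinearEquiv.ofEq _ _ (Finsupp.range_linearCombination ℝ)).symm ⟨A c, hx⟩ =
        ⟨A c, LinearMap.mem_range_self A c⟩ := rfl
    simp only [L, LinearMap.comp_apply, LinearEquiv.coe_coe, this,
      LinearMap.quotKerEquivRange_symm_apply_image, mkQ_apply, liftQ_apply]
  refine ⟨⟨L, fun x => ?_⟩, fun i => by simpa [B] using hL _ (Finsupp.single i 1) (by simp [A])⟩
  obtain ⟨c, hc⟩ : ∃ c, A c = x := by
    rw [← LinearMap.mem_range, Finsupp.range_linearCombination]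
    exact x.2
  rw [hL x c hc, ← norm_coe, ← hc, norm_linearCombination_eq_of_inner_eq h]

theorem exists_linearIsometryEquiv_eqOn_of_inner_eq [FiniteDimensional ℝ E] {T : Set E}
    {F : E → E} (h : ∀ u ∈ T, ∀ v ∈ T, ⟪F u, F v⟫ = ⟪u, v⟫) :
    ∃ L : E ≃ₗᵢ[ℝ] E, Set.EqOn L F T := by
  obtain ⟨L, hL⟩ := exists_linearIsometry_span_of_inner_eq (v := ((↑) : T → E)) (w := F ∘ (↑))
    fun u v => h u u.2 v v.2
  refine ⟨L.extend.toLinearIsometryEquiv rfl, fun u hu => ?_⟩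
  exact (L.extend_apply _).trans (hL ⟨u, hu⟩)

end Linear

section Affine

variable {V P V₂ P₂ : Type*} [NormedAddCommGroup V] [InnerProductSpace ℝ V] [MetricSpace P]
  [NormedAddTorsor V P] [NormedAddCommGroup V₂] [InnerProductSpace ℝ V₂] [MetricSpace P₂]
  [NormedAddTorsor V₂ P₂]

theorem inner_vsub_vsub_eq_of_dist_eq {S : Set P} {f : P → P₂}
    (hf : ∀ x ∈ S, ∀ y ∈ S, dist (f x) (f y) = dist x y) {a b c : P}
    (ha : a ∈ S) (hb : b ∈ S) (hc : c ∈ S) :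
    ⟪f a -ᵥ f c, f b -ᵥ f c⟫ = ⟪a -ᵥ c, b -ᵥ c⟫ := by
  simp only [real_inner_eq_norm_mul_self_add_norm_mul_self_sub_norm_sub_mul_self_div_two,
    vsub_sub_vsub_cancel_right, ← dist_eq_norm_vsub, hf _ ha _ hb, hf _ ha _ hc, hf _ hb _ hc]

theorem exists_affineIsometryEquiv_eqOn_of_dist_eq [FiniteDimensional ℝ V] {S : Set P}
    {f : P → P} (hf : ∀ x ∈ S, ∀ y ∈ S, dist (f x) (f y) = dist x y) :
    ∃ g : P ≃ᵃⁱ[ℝ] P, Set.EqOn g f S := by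
  rcases S.eq_empty_or_nonempty with rfl | ⟨p₀, hp₀⟩
  · exact ⟨AffineIsometryEquiv.refl ℝ P, Set.eqOn_empty _ _⟩
  obtain ⟨L, hL⟩ := exists_linearIsometryEquiv_eqOn_of_inner_eq
    (T := (· -ᵥ p₀) '' S) (F := fun u => f (u +ᵥ p₀) -ᵥ f p₀) <| by
      rintro _ ⟨x, hx, rfl⟩ _ ⟨y, hy, rfl⟩
      simpa only [vsub_vadd] using inner_vsub_vsub_eq_of_dist_eq hf hx hy hp₀
  refine ⟨.mk' (fun p => L (p -ᵥ p₀) +ᵥ f p₀) L p₀ fun _ => by simp, fun x hx => ?_⟩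
  simp [hL (Set.mem_image_of_mem _ hx)]

end Affine

/-- Any map preserving all pairwise distances on a subset `S` of `ℝⁿ` agrees on `S`
with a global isometry of `ℝⁿ` (an affine isometry equivalence). -/
theorem exists_affineIsometryEquiv_extending (n : ℕ) (S : Set (EuclideanSpace ℝ (Fin n)))
    (f : EuclideanSpace ℝ (Fin n) → EuclideanSpace ℝ (Fin n))
    (hf : ∀ x ∈ S, ∀ y ∈ S, dist (f x) (f y) = dist x y) :
    ∃ g : EuclideanSpace ℝ (Fin n) ≃ᵃⁱ[ℝ] EuclideanSpace ℝ (Fin n),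
      ∀ x ∈ S, g x = f x :=
  exists_affineIsometryEquiv_eqOn_of_dist_eq hf
end
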